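/- Let τ ∈ S_d be non-monotone and let σ ≤ τ with |τ| − |σ| = 2, σ ≠ i(τ), and σ ≠ x(τ). Then the open interval (σ, τ) in the consecutive pattern poset contains exactly one element, and consequently μ(σ,τ) = 0. -/

import Mathlib

/-- Standardization of a list of distinct naturals: replace each entry by its rank
(the number of entries less than or equal to it). -/
def stdize (s : List ℕ) : List ℕ := s.map (fun x => (s.filter (· ≤ x)).length)

/-- All contiguous subwords (infixes) of a list. -/
def infixes (l : List ℕ) : List (List ℕ) := l.inits.flatMap List.tails

/-- `l` is a permutation of `{1,…,d}` where `d = l.length ≥ 1`; these are the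
elements of the consecutive pattern poset. -/
def IsPermList (l : List ℕ) : Prop := l ≠ [] ∧ l.Perm (List.range' 1 l.length)

/-- Consecutive pattern containment: `σ ≤ τ` iff `σ` is the standardization of
some contiguous subsequence of `τ`. -/
def PattLE (σ τ : List ℕ) : Prop := σ ∈ (infixes τ).map stdize

instance (σ τ : List ℕ) : Decidable (PattLE σ τ) :=
  inferInstanceAs (Decidable (σ ∈ (infixes τ).map stdize))

/-- A permutation is monotone if its letters strictly increase or strictly decrease. -/
def MonotoneList (l : List ℕ) : Prop := l.Chain' (· < ·) ∨ l.Chain' (· > ·)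

/-- The interior `i(τ)`: standardization of `τ` with first and last letters removed. -/
def pattInterior (τ : List ℕ) : List ℕ := stdize τ.tail.dropLast

/-- Length of the longest proper prefix of `τ` whose standardization is also the
standardization of a suffix of `τ`. -/
def extLen (τ : List ℕ) : ℕ :=
  Nat.findGreatest (fun k => stdize (τ.take k) = stdize (τ.drop (τ.length - k))) (τ.length - 1)

/-- The exterior `x(τ)`: the longest permutation that is both a proper prefix and a
suffix of `τ`. -/
def pattExterior (τ : List ℕ) : List ℕ := stdize (τ.take (extLen τ))

/-- The closed interval `[σ,τ]` in the consecutive pattern poset, as a `Finset`. -/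
def pattInterval (σ τ : List ℕ) : Finset (List ℕ) :=
  ((infixes τ).map stdize).toFinset.filter (fun z => PattLE σ z)

/-- The open interval `(σ,τ)` in the consecutive pattern poset, as a `Finset`. -/
def openPattInterval (σ τ : List ℕ) : Finset (List ℕ) :=
  ((infixes τ).map stdize).toFinset.filter (fun z => PattLE σ z ∧ z ≠ σ ∧ z ≠ τ)

/-- `τ` covers `σ` in the consecutive pattern poset: `σ < τ` and no element lies
strictly between them. -/
def CoveredBy (σ τ : List ℕ) : Prop :=
  PattLE σ τ ∧ σ ≠ τ ∧ ¬ ∃ ρ, IsPermList ρ ∧ PattLE σ ρ ∧ PattLE ρ τ ∧ ρ ≠ σ ∧ ρ ≠ τ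

/-- `c` is a maximal chain of the interval `[σ,τ]`: it starts at `τ`, ends at `σ`,
and each element covers the next. -/
def IsMaxChainPatt (σ τ : List ℕ) (c : List (List ℕ)) : Prop :=
  c.head? = some τ ∧ c.getLast? = some σ ∧ c.Chain' (fun a b => CoveredBy b a)


/-!
Every element of the open interval has length `d - 1`, so it is the standardized prefix or
suffix of length `d - 1` of `τ`. The patterns of length `d - 2` of that prefix are the prefix
of length `d - 2` and `i(τ)`; those of the suffix are `i(τ)` and the suffix of length `d - 2`.
As `σ ≠ i(τ)`, it lies below exactly one of the two: below both, it would be a prefix and a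
suffix of length `d - 2`, and since a non-monotone `τ` has different prefix and suffix of
length `d - 1`, it would be `x(τ)`. A Möbius function vanishes on an interval that is a chain
of three elements.
-/

def stdRank (l : List ℕ) (x : ℕ) : ℕ := (l.filter (· ≤ x)).length

lemma stdize_eq_map_stdRank (l : List ℕ) : stdize l = l.map (stdRank l) := rfl

@[simp]
lemma length_stdize (l : List ℕ) : (stdize l).length = l.length := List.length_map _

lemma stdRank_mono (l : List ℕ) : Monotone (stdRank l) := fun x y hxy =>
  (List.monotone_filter_right l (by simp only [decide_eq_true_eq]; omega)).length_le

lemma stdRank_lt_stdRank {l : List ℕ} {x y : ℕ} (hy : y ∈ l) (hxy : x < y) :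
    stdRank l x < stdRank l y := by
  have hsub : (l.filter (· ≤ x)).Sublist (l.filter (· ≤ y)) :=
    List.monotone_filter_right l (by simp only [decide_eq_true_eq]; omega)
  refine lt_of_le_of_ne hsub.length_le fun heq => ?_
  have hy' : y ∈ l.filter (· ≤ x) := hsub.eq_of_length heq ▸ List.mem_filter.2 ⟨hy, by simp⟩
  simp only [List.mem_filter, decide_eq_true_eq] at hy'
  omega

lemma stdRank_lt_stdRank_iff {l : List ℕ} {x y : ℕ} (hy : y ∈ l) :
    stdRank l x < stdRank l y ↔ x < y :=
  ⟨fun h => lt_of_not_ge fun hyx => (stdRank_mono l hyx).not_gt h, stdRank_lt_stdRank hy⟩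

lemma stdRank_strictMonoOn (l : List ℕ) : StrictMonoOn (stdRank l) {x | x ∈ l} :=
  fun _ _ _ hy hxy => stdRank_lt_stdRank hy hxy

lemma stdize_map_of_strictMonoOn {l : List ℕ} {f : ℕ → ℕ} (hf : StrictMonoOn f {x | x ∈ l}) :
    stdize (l.map f) = stdize l := by
  simp only [stdize_eq_map_stdRank, List.map_map]
  refine List.map_congr_left fun x hx => ?_
  simp only [Function.comp_apply, stdRank, List.filter_map, List.length_map]
  congr 1
  refine List.filter_congr fun a ha => ?_
  simp [Function.comp_apply, hf.le_iff_le ha hx]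

@[simp]
lemma stdize_stdize (l : List ℕ) : stdize (stdize l) = stdize l :=
  stdize_map_of_strictMonoOn (stdRank_strictMonoOn l)

lemma lt_iff_lt_of_stdize_eq {a b : List ℕ} (h : stdize a = stdize b) {i j : ℕ}
    (hi : i < a.length) (hj : j < a.length) (hib : i < b.length) (hjb : j < b.length) :
    a[i] < a[j] ↔ b[i] < b[j] := by
  have hrank : ∀ k (hk : k < a.length) (hkb : k < b.length), stdRank a a[k] = stdRank b b[k] := by
    intro k hk hkb
    simpa only [stdize_eq_map_stdRank, List.getElem_map] using
      List.getElem_of_eq h (by simp [hk])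
  rw [← stdRank_lt_stdRank_iff (List.getElem_mem hj), hrank i hi hib, hrank j hj hjb,
    stdRank_lt_stdRank_iff (List.getElem_mem hjb)]

lemma stdRank_range' {n x : ℕ} (hx : x ≤ n) : stdRank (List.range' 1 n) x = x := by
  have hsplit : List.range' 1 n = List.range' 1 x ++ List.range' (1 + x) (n - x) := by
    rw [List.range'_append_1, Nat.add_sub_cancel' hx]
  unfold stdRank
  rw [hsplit, List.filter_append,
    List.filter_eq_self.2 (fun a ha => by simp only [List.mem_range'_1] at ha; simp; omega),
    List.filter_eq_nil_iff.2 (fun a ha => by simp only [List.mem_range'_1] at ha; simp; omega)]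
  simp

lemma stdize_eq_self_of_perm {l : List ℕ} (h : l.Perm (List.range' 1 l.length)) :
    stdize l = l := by
  conv_rhs => rw [← List.map_id l]
  rw [stdize_eq_map_stdRank]
  refine List.map_congr_left fun x hx => ?_
  have hx' := List.mem_range'_1.1 (h.subset hx)
  unfold stdRank
  rw [(h.filter _).length_eq]
  exact stdRank_range' (by omega)

lemma isPermList_stdize {l : List ℕ} (hne : l ≠ []) (hnd : l.Nodup) : IsPermList (stdize l) := by
  refine ⟨by simpa [stdize] using hne, ?_⟩
  have hnd' : (stdize l).Nodup := hnd.map_on fun x hx y hy => (stdRank_strictMonoOn l).injOn hx hy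
  have hsub : stdize l ⊆ List.range' 1 (stdize l).length := by
    intro z hz
    rw [stdize_eq_map_stdRank] at hz
    obtain ⟨x, hx, rfl⟩ := List.mem_map.1 hz
    rw [List.mem_range'_1, length_stdize]
    have hpos : 0 < stdRank l x :=
      List.length_pos_iff.2 (List.ne_nil_of_mem (List.mem_filter.2 ⟨hx, by simp⟩))
    have hle : stdRank l x ≤ l.length := List.length_filter_le _ _
    omega
  exact (hnd'.subperm hsub).perm_of_length_le (by simp)

lemma List.IsInfix.infix_dropLast_or_infix_tail {α : Type*} {v w : List α} (h : v <:+: w)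
    (hlt : v.length < w.length) : v <:+: w.dropLast ∨ v <:+: w.tail := by
  obtain _ | ⟨a, t⟩ := w
  · simp at hlt
  · refine (List.infix_cons_iff.1 h).imp (fun hp => ?_) id
    refine (List.prefix_of_prefix_length_le hp (List.dropLast_prefix _) ?_).isInfix
    simp only [List.length_dropLast, List.length_cons] at hlt ⊢
    omega

lemma mem_infixes {w l : List ℕ} : w ∈ infixes l ↔ w <:+: l := by
  simp only [infixes, List.mem_flatMap, List.mem_inits, List.mem_tails]
  constructor
  · rintro ⟨p, ⟨u, rfl⟩, ⟨v, rfl⟩⟩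
    exact ⟨v, u, by simp⟩
  · rintro ⟨s, t, rfl⟩
    exact ⟨s ++ w, ⟨t, by simp⟩, s, rfl⟩

lemma pattLE_iff {σ τ : List ℕ} : PattLE σ τ ↔ ∃ w, w <:+: τ ∧ stdize w = σ := by
  simp only [PattLE, List.mem_map, mem_infixes]

lemma pattLE_refl {σ : List ℕ} (h : stdize σ = σ) : PattLE σ σ :=
  pattLE_iff.2 ⟨σ, List.infix_refl σ, h⟩

lemma pattLE_stdize_iff {σ w : List ℕ} : PattLE σ (stdize w) ↔ ∃ v, v <:+: w ∧ stdize v = σ := by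
  have hpull : ∀ v, v <:+: w → stdize (v.map (stdRank w)) = stdize v := fun v hv =>
    stdize_map_of_strictMonoOn ((stdRank_strictMonoOn w).mono fun x hx => hv.subset hx)
  rw [pattLE_iff, stdize_eq_map_stdRank w]
  constructor
  · rintro ⟨u, hu, rfl⟩
    obtain ⟨v, hv, rfl⟩ := List.infix_map_iff.1 hu
    exact ⟨v, hv, (hpull v hv).symm⟩
  · rintro ⟨v, hv, rfl⟩
    exact ⟨v.map (stdRank w), hv.map _, hpull v hv⟩

lemma pattLE_stdize_of_infix {v w : List ℕ} (h : v <:+: w) : PattLE (stdize v) (stdize w) :=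
  pattLE_stdize_iff.2 ⟨v, h, rfl⟩

lemma PattLE.length_le {σ τ : List ℕ} (h : PattLE σ τ) : σ.length ≤ τ.length := by
  obtain ⟨w, hw, rfl⟩ := pattLE_iff.1 h
  simpa using hw.length_le

lemma PattLE.eq_of_length_le {σ τ : List ℕ} (hτ : stdize τ = τ) (h : PattLE σ τ)
    (hl : τ.length ≤ σ.length) : σ = τ := by
  obtain ⟨w, hw, rfl⟩ := pattLE_iff.1 h
  rw [hw.eq_of_length (le_antisymm hw.length_le (by simpa using hl)), hτ]

lemma PattLE.dropLast_or_tail {σ w : List ℕ} (h : PattLE σ (stdize w))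
    (hlt : σ.length < w.length) : PattLE σ (stdize w.dropLast) ∨ PattLE σ (stdize w.tail) := by
  obtain ⟨v, hv, rfl⟩ := pattLE_stdize_iff.1 h
  exact (hv.infix_dropLast_or_infix_tail (by simpa using hlt)).imp
    pattLE_stdize_of_infix pattLE_stdize_of_infix

lemma pattLE_stdize_iff_of_length_succ {σ w : List ℕ} (hlen : σ.length + 1 = w.length) :
    PattLE σ (stdize w) ↔ σ = stdize w.dropLast ∨ σ = stdize w.tail := by
  have hshort : σ.length < w.length := by omega
  refine ⟨fun h => (h.dropLast_or_tail hshort).imp (fun h' => ?_) (fun h' => ?_), ?_⟩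
  · exact h'.eq_of_length_le (stdize_stdize _) (by simp; omega)
  · exact h'.eq_of_length_le (stdize_stdize _) (by simp; omega)
  · rintro (rfl | rfl)
    · exact pattLE_stdize_of_infix (List.dropLast_prefix w).isInfix
    · exact pattLE_stdize_of_infix (List.tail_suffix w).isInfix

lemma monotoneList_of_stdize_dropLast_eq_stdize_tail {τ : List ℕ} (hnd : τ.Nodup)
    (h : stdize τ.dropLast = stdize τ.tail) : MonotoneList τ := by
  have hstep : ∀ i (hi : i + 2 < τ.length), τ[i] < τ[i + 1] ↔ τ[i + 1] < τ[i + 2] := by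
    intro i hi
    have := lt_iff_lt_of_stdize_eq h (i := i) (j := i + 1)
      (by simp; omega) (by simp; omega) (by simp; omega) (by simp; omega)
    rwa [List.getElem_dropLast, List.getElem_dropLast, List.getElem_tail, List.getElem_tail] at this
  have hconst : ∀ i (hi : i + 1 < τ.length), τ[i] < τ[i + 1] ↔ τ[0] < τ[1] := by
    intro i
    induction i with
    | zero => intro _; rfl
    | succ k ih => intro hk; exact (hstep k (by omega)).symm.trans (ih (by omega))
  change List.IsChain (· < ·) τ ∨ List.IsChain (· > ·) τ
  simp only [List.isChain_iff_getElem]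
  by_cases hup : ∃ h : 1 < τ.length, τ[0] < τ[1]
  · obtain ⟨_, hup⟩ := hup
    exact Or.inl fun i hi => (hconst i hi).2 hup
  · refine Or.inr fun i hi => ?_
    have hne : τ[i] ≠ τ[i + 1] := fun he => by simpa using hnd.getElem_inj_iff.1 he
    have hdown := (hconst i hi).not.2 fun h => hup ⟨by omega, h⟩
    omega

lemma pattExterior_eq_of_not_monotoneList {τ : List ℕ} (hnd : τ.Nodup) (hmono : ¬ MonotoneList τ)
    (h : stdize τ.dropLast.dropLast = stdize τ.tail.tail) :
    pattExterior τ = stdize τ.dropLast.dropLast := by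
  have hprefix : τ.dropLast.dropLast = τ.take (τ.length - 2) := by
    simp only [List.dropLast_eq_take, List.take_take, List.length_take]
    congr 1
    omega
  rw [hprefix] at h ⊢
  have hext : extLen τ = τ.length - 2 := by
    rw [extLen, Nat.findGreatest_eq_iff]
    refine ⟨by omega, fun hne => ?_, fun n hlt hle => ?_⟩
    · rw [show τ.length - (τ.length - 2) = 2 by omega]
      simpa [← List.drop_one] using h
    · obtain rfl : n = τ.length - 1 := by omega
      rw [show τ.length - (τ.length - 1) = 1 by omega]
      exact fun hP => hmono (monotoneList_of_stdize_dropLast_eq_stdize_tail hnd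
        (by simpa [List.dropLast_eq_take] using hP))
  rw [pattExterior, hext]

lemma PattLE.isPermList {ρ τ : List ℕ} (h : PattLE ρ τ) (hτ : τ.Nodup) (hρ : ρ ≠ []) :
    IsPermList ρ := by
  obtain ⟨w, hw, rfl⟩ := pattLE_iff.1 h
  exact isPermList_stdize (by simpa [stdize] using hρ) (hw.sublist.nodup hτ)

lemma mem_pattInterval {σ τ z : List ℕ} : z ∈ pattInterval σ τ ↔ PattLE z τ ∧ PattLE σ z := by
  simp [pattInterval, PattLE]

lemma mem_openPattInterval {σ τ z : List ℕ} :
    z ∈ openPattInterval σ τ ↔ PattLE z τ ∧ PattLE σ z ∧ z ≠ σ ∧ z ≠ τ := by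
  simp [openPattInterval, PattLE]

lemma pattInterval_self {σ : List ℕ} (hσ : stdize σ = σ) : pattInterval σ σ = {σ} := by
  ext z
  rw [mem_pattInterval, Finset.mem_singleton]
  refine ⟨fun ⟨hzσ, hσz⟩ => hzσ.eq_of_length_le hσ hσz.length_le, ?_⟩
  rintro rfl
  exact ⟨pattLE_refl hσ, pattLE_refl hσ⟩

lemma pattInterval_eq_insert_insert_openPattInterval {σ τ : List ℕ} (hσ : stdize σ = σ)
    (hτ : stdize τ = τ) (hle : PattLE σ τ) :
    pattInterval σ τ = insert σ (insert τ (openPattInterval σ τ)) := by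
  ext z
  simp only [mem_pattInterval, Finset.mem_insert, mem_openPattInterval]
  by_cases hzσ : z = σ
  · subst hzσ; simp [hle, pattLE_refl hσ]
  by_cases hzτ : z = τ
  · subst hzτ; simp [hle, pattLE_refl hτ]
  simp [hzσ, hzτ]

lemma length_lt_of_mem_openPattInterval {σ τ z : List ℕ} (hτ : stdize τ = τ)
    (hz : z ∈ openPattInterval σ τ) : σ.length < z.length ∧ z.length < τ.length := by
  obtain ⟨hzτ, hσz, hzσ, hzτ'⟩ := mem_openPattInterval.1 hz
  obtain ⟨w, -, rfl⟩ := pattLE_iff.1 hzτ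
  exact ⟨lt_of_le_of_ne hσz.length_le fun he =>
      hzσ (hσz.eq_of_length_le (stdize_stdize w) he.ge).symm,
    lt_of_le_of_ne hzτ.length_le fun he => hzτ' (hzτ.eq_of_length_le hτ he.ge)⟩

lemma openPattInterval_eq_empty_of_length_le {σ ρ : List ℕ} (hρ : stdize ρ = ρ)
    (hlen : ρ.length ≤ σ.length + 1) : openPattInterval σ ρ = ∅ :=
  Finset.eq_empty_of_forall_notMem fun z hz => by
    have := length_lt_of_mem_openPattInterval hρ hz
    omega

lemma openPattInterval_eq_filter {σ τ : List ℕ} (hτ : stdize τ = τ)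
    (hlen : σ.length + 2 = τ.length) :
    openPattInterval σ τ =
      ({stdize τ.dropLast, stdize τ.tail} : Finset (List ℕ)).filter (PattLE σ) := by
  ext z
  simp only [Finset.mem_filter, Finset.mem_insert, Finset.mem_singleton]
  constructor
  · intro hz
    have hzlen := length_lt_of_mem_openPattInterval hτ hz
    obtain ⟨hzτ, hσz, -⟩ := mem_openPattInterval.1 hz
    rw [← hτ] at hzτ
    exact ⟨(pattLE_stdize_iff_of_length_succ (by omega)).1 hzτ, hσz⟩
  · rintro ⟨hz, hσz⟩
    have hzlen : z.length + 1 = τ.length := by rcases hz with rfl | rfl <;> simp <;> omega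
    have hzτ : PattLE z τ := hτ ▸ (pattLE_stdize_iff_of_length_succ hzlen).2 hz
    refine mem_openPattInterval.2 ⟨hzτ, hσz, ?_, ?_⟩ <;> rintro rfl <;> omega

lemma card_openPattInterval_eq_one {σ τ : List ℕ} (hτ : IsPermList τ) (hmono : ¬ MonotoneList τ)
    (hle : PattLE σ τ) (hlen : σ.length + 2 = τ.length) (hi : σ ≠ pattInterior τ)
    (hx : σ ≠ pattExterior τ) : (openPattInterval σ τ).card = 1 := by
  have hτfix := stdize_eq_self_of_perm hτ.2
  have hnd : τ.Nodup := hτ.2.nodup_iff.2 List.nodup_range'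
  have hP : PattLE σ (stdize τ.dropLast) ↔ σ = stdize τ.dropLast.dropLast := by
    rw [pattLE_stdize_iff_of_length_succ (by simp; omega), List.tail_dropLast]
    exact or_iff_left hi
  have hS : PattLE σ (stdize τ.tail) ↔ σ = stdize τ.tail.tail := by
    rw [pattLE_stdize_iff_of_length_succ (by simp; omega)]
    exact or_iff_right hi
  -- an occurrence of `σ` at both ends of `τ` would make it the exterior
  have hnot_both : ¬ (PattLE σ (stdize τ.dropLast) ∧ PattLE σ (stdize τ.tail)) := by
    rintro ⟨hσP, hσS⟩
    rw [hP] at hσP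
    rw [hS] at hσS
    exact hx (hσP.trans (pattExterior_eq_of_not_monotoneList hnd hmono (hσP ▸ hσS)).symm)
  rw [← hτfix] at hle
  rw [openPattInterval_eq_filter hτfix hlen, Finset.filter_insert, Finset.filter_singleton]
  rcases hle.dropLast_or_tail (by omega) with hσP | hσS
  · have hσS : ¬ PattLE σ (stdize τ.tail) := fun hσS => hnot_both ⟨hσP, hσS⟩
    simp [hσP, hσS]
  · have hσP : ¬ PattLE σ (stdize τ.dropLast) := fun hσP => hnot_both ⟨hσP, hσS⟩
    simp [hσP, hσS]

def IsPattMobius (μ : List ℕ → List ℕ → ℤ) : Prop :=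
  ∀ σ τ : List ℕ, IsPermList σ → IsPermList τ → PattLE σ τ →
    ∑ z ∈ pattInterval σ τ, μ σ z = if σ = τ then 1 else 0

lemma IsPattMobius.apply_self {μ : List ℕ → List ℕ → ℤ} (hμ : IsPattMobius μ) {σ : List ℕ}
    (hσ : IsPermList σ) : μ σ σ = 1 := by
  have hσfix := stdize_eq_self_of_perm hσ.2
  have h := hμ σ σ hσ hσ (pattLE_refl hσfix)
  rwa [pattInterval_self hσfix, Finset.sum_singleton, if_pos rfl] at h

lemma IsPattMobius.one_add_apply_add_sum_openPattInterval {μ : List ℕ → List ℕ → ℤ}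
    (hμ : IsPattMobius μ) {σ τ : List ℕ} (hσ : IsPermList σ) (hτ : IsPermList τ)
    (hle : PattLE σ τ) (hne : σ ≠ τ) :
    1 + μ σ τ + ∑ z ∈ openPattInterval σ τ, μ σ z = 0 := by
  have h := hμ σ τ hσ hτ hle
  rw [pattInterval_eq_insert_insert_openPattInterval (stdize_eq_self_of_perm hσ.2)
      (stdize_eq_self_of_perm hτ.2) hle, Finset.sum_insert, Finset.sum_insert, if_neg hne,
    hμ.apply_self hσ, ← add_assoc] at h
  · exact h
  · simp [mem_openPattInterval]
  · simp [mem_openPattInterval, hne]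

lemma IsPattMobius.apply_eq_zero_of_openPattInterval_eq_singleton {μ : List ℕ → List ℕ → ℤ}
    (hμ : IsPattMobius μ) {σ τ ρ : List ℕ} (hσ : IsPermList σ) (hτ : IsPermList τ)
    (hle : PattLE σ τ) (hlen : σ.length + 2 = τ.length) (hρ : openPattInterval σ τ = {ρ}) :
    μ σ τ = 0 := by
  have hρmem : ρ ∈ openPattInterval σ τ := hρ ▸ Finset.mem_singleton_self ρ
  obtain ⟨hσρlen, hρτlen⟩ := length_lt_of_mem_openPattInterval (stdize_eq_self_of_perm hτ.2) hρmem
  obtain ⟨hρτ, hσρ, hρσ, -⟩ := mem_openPattInterval.1 hρmem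
  have hρ_perm : IsPermList ρ :=
    hρτ.isPermList (hτ.2.nodup_iff.2 List.nodup_range') (List.ne_nil_of_length_pos (by omega))
  have hρ_cover := hμ.one_add_apply_add_sum_openPattInterval hσ hρ_perm hσρ (Ne.symm hρσ)
  rw [openPattInterval_eq_empty_of_length_le (stdize_eq_self_of_perm hρ_perm.2) (by omega),
    Finset.sum_empty] at hρ_cover
  have hτ_sum := hμ.one_add_apply_add_sum_openPattInterval hσ hτ hle (by rintro rfl; omega)
  rw [hρ, Finset.sum_singleton] at hτ_sum
  omega

/-- If `τ` is not monotone, `σ ≤ τ` with `|τ| − |σ| = 2`, and `σ` is neither `i(τ)`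
nor `x(τ)`, then the open interval `(σ,τ)` contains exactly one element, and
consequently `μ(σ,τ) = 0`.  Here `μ` is any function satisfying the defining
recursion of the Möbius function. -/
theorem not_monotone_open_interval_card_one
    (μ : List ℕ → List ℕ → ℤ)
    (hμ : ∀ σ τ : List ℕ, IsPermList σ → IsPermList τ → PattLE σ τ →
      ∑ z ∈ pattInterval σ τ, μ σ z = if σ = τ then 1 else 0)
    (σ τ : List ℕ) (hσ : IsPermList σ) (hτ : IsPermList τ)
    (hmono : ¬ MonotoneList τ) (hle : PattLE σ τ) (hlen : σ.length + 2 = τ.length)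
    (hi : σ ≠ pattInterior τ) (hx : σ ≠ pattExterior τ) :
    (openPattInterval σ τ).card = 1 ∧ μ σ τ = 0 := by
  have hcard := card_openPattInterval_eq_one hτ hmono hle hlen hi hx
  obtain ⟨ρ, hρ⟩ := Finset.card_eq_one.1 hcard
  exact ⟨hcard, IsPattMobius.apply_eq_zero_of_openPattInterval_eq_singleton hμ hσ hτ hle hlen hρ⟩
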